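/- arXiv:math/0005155 — 2 statements merged into one kernel-verified Lean document; each statement's English description precedes it below -/
import Mathlib

section
/- Let K be a field, A a commutative K-algebra, and I ⊆ A an ideal. Let A[ε] denote the dual numbers over A (so ε² = 0) with projection π : A[ε] → A sending ε to 0. Then there is a bijection between the set of A-linear maps φ : I → A/I and the set of ideals Ĩ ⊆ A[ε] satisfying π(Ĩ) = I and Ĩ ∩ εA = εI; the bijection sends φ to Ĩ_φ = { x + εy : x ∈ I, y ∈ A, y + I = φ(x) }. -/
open TrivSqZeroExt

section Aux

variable {A : Type*} [CommRing A]

lemma mk_smul' (I : Ideal A) (a b : A) :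
    a • (Ideal.Quotient.mk I b) = Ideal.Quotient.mk I (a * b) := by
  rw [← Ideal.Quotient.mk_eq_mk, ← Ideal.Quotient.mk_eq_mk, ← Submodule.Quotient.mk_smul,
    smul_eq_mul]

lemma eps_mul_inl' (y : A) :
    (DualNumber.eps * TrivSqZeroExt.inl y : DualNumber A) = TrivSqZeroExt.inr y := by
  ext <;> simp

def defIdeal (I : Ideal A) (φ : I →ₗ[A] A ⧸ I) : Ideal (DualNumber A) where
  carrier := {z | ∃ h : fst z ∈ I, Ideal.Quotient.mk I (snd z) = φ ⟨fst z, h⟩}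
  zero_mem' := ⟨I.zero_mem, by
    show Ideal.Quotient.mk I (snd (0 : DualNumber A)) = φ 0
    simp⟩
  add_mem' := by
    rintro a b ⟨ha, hae⟩ ⟨hb, hbe⟩
    refine ⟨I.add_mem ha hb, ?_⟩
    have : (⟨fst (a + b), I.add_mem ha hb⟩ : I) = ⟨fst a, ha⟩ + ⟨fst b, hb⟩ := by
      ext; simp
    rw [this, map_add, ← hae, ← hbe]
    simp
  smul_mem' := by
    rintro c z ⟨hz, hze⟩
    refine ⟨I.mul_mem_left (fst c) hz, ?_⟩
    have h1 : (⟨fst (c • z), I.mul_mem_left (fst c) hz⟩ : I) = fst c • ⟨fst z, hz⟩ := by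
      ext; simp [smul_eq_mul]
    rw [h1, map_smul]
    have h2 : snd (c • z) = fst c * snd z + snd c * fst z := by
      show snd (c * z) = _
      rw [snd_mul]
      simp [smul_eq_mul, mul_comm]
    rw [h2, map_add, ← hze]
    have h3 : Ideal.Quotient.mk I (snd c * fst z) = 0 := by
      rw [Ideal.Quotient.eq_zero_iff_mem]
      exact I.mul_mem_left _ hz
    rw [h3, add_zero, mk_smul']

lemma mem_defIdeal {I : Ideal A} {φ : I →ₗ[A] A ⧸ I} {z : DualNumber A} :
    z ∈ defIdeal I φ ↔ ∃ h : fst z ∈ I, Ideal.Quotient.mk I (snd z) = φ ⟨fst z, h⟩ :=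
  Iff.rfl

lemma defIdeal_cond1 (I : Ideal A) (φ : I →ₗ[A] A ⧸ I) :
    (fun z : DualNumber A => fst z) '' ((defIdeal I φ : Ideal (DualNumber A)) : Set (DualNumber A))
      = (I : Set A) := by
  ext x
  constructor
  · rintro ⟨z, ⟨hz, -⟩, rfl⟩
    exact hz
  · intro hx
    obtain ⟨y, hy⟩ := Ideal.Quotient.mk_surjective (φ ⟨x, hx⟩)
    refine ⟨inl x + inr y, ⟨by simpa using hx, ?_⟩, by simp⟩
    simp only [snd_add, snd_inl, snd_inr, zero_add, fst_add, fst_inl, fst_inr, add_zero]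
    exact hy

lemma defIdeal_cond2 (I : Ideal A) (φ : I →ₗ[A] A ⧸ I) :
    ((defIdeal I φ : Ideal (DualNumber A)) : Set (DualNumber A)) ∩
        {z : DualNumber A | ∃ y : A, z = DualNumber.eps * TrivSqZeroExt.inl y}
      = {z : DualNumber A | ∃ y ∈ I, z = DualNumber.eps * TrivSqZeroExt.inl y} := by
  ext z
  simp only [Set.mem_inter_iff, Set.mem_setOf_eq, eps_mul_inl']
  constructor
  · rintro ⟨⟨hz, hze⟩, y, rfl⟩
    refine ⟨y, ?_, rfl⟩
    have h0 : (⟨fst (inr y : DualNumber A), hz⟩ : I) = 0 := by ext; simp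
    rw [h0, map_zero] at hze
    have := (Ideal.Quotient.eq_zero_iff_mem).mp (by simpa using hze)
    exact this
  · rintro ⟨y, hy, rfl⟩
    refine ⟨⟨by simp, ?_⟩, ⟨y, rfl⟩⟩
    have h0 : (⟨fst (inr y : DualNumber A), by simp⟩ : I) = 0 := by ext; simp
    rw [h0, map_zero, Ideal.Quotient.eq_zero_iff_mem]
    simpa using hy

end Aux

/-- Formula (1.2.1) as first-order deformations: `A`-linear maps `φ : I → A/I` are in
bijection with ideals `Ĩ ⊆ A[ε]` with `π(Ĩ) = I` and `Ĩ ∩ εA = εI`, via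
`φ ↦ { x + εy : x ∈ I, y ∈ A, y + I = φ(x) }`. -/
theorem linearMap_equiv_dualNumber_ideals
    (K A : Type*) [Field K] [CommRing A] [Algebra K A] (I : Ideal A) :
    ∃ e : (I →ₗ[A] A ⧸ I) ≃
        {J : Ideal (DualNumber A) //
          (fun z : DualNumber A => TrivSqZeroExt.fst z) '' (J : Set (DualNumber A))
              = (I : Set A) ∧
          (J : Set (DualNumber A)) ∩
              {z : DualNumber A | ∃ y : A, z = DualNumber.eps * TrivSqZeroExt.inl y}
            = {z : DualNumber A | ∃ y ∈ I, z = DualNumber.eps * TrivSqZeroExt.inl y}},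
      ∀ φ : I →ₗ[A] A ⧸ I,
        ((((e φ) : Ideal (DualNumber A))) : Set (DualNumber A))
          = {z : DualNumber A | ∃ (x y : A) (hx : x ∈ I),
              Ideal.Quotient.mk I y = φ ⟨x, hx⟩ ∧
              z = TrivSqZeroExt.inl x + DualNumber.eps * TrivSqZeroExt.inl y} := by
  classical
  set f : (I →ₗ[A] A ⧸ I) →
      {J : Ideal (DualNumber A) //
        (fun z : DualNumber A => TrivSqZeroExt.fst z) '' (J : Set (DualNumber A))
            = (I : Set A) ∧
        (J : Set (DualNumber A)) ∩
            {z : DualNumber A | ∃ y : A, z = DualNumber.eps * TrivSqZeroExt.inl y}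
          = {z : DualNumber A | ∃ y ∈ I, z = DualNumber.eps * TrivSqZeroExt.inl y}} :=
    fun φ => ⟨defIdeal I φ, defIdeal_cond1 I φ, defIdeal_cond2 I φ⟩ with hf
  have hinj : Function.Injective f := by
    intro φ ψ h
    have h' : defIdeal I φ = defIdeal I ψ := congrArg Subtype.val h
    ext x
    obtain ⟨y, hy⟩ := Ideal.Quotient.mk_surjective (φ x)
    have hz : (inl (x : A) + inr y : DualNumber A) ∈ defIdeal I φ := by
      refine ⟨by simp [x.2], by simp [hy]⟩
    rw [h'] at hz
    obtain ⟨h1, h2⟩ := hz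
    simp only [fst_add, fst_inl, fst_inr, add_zero, snd_add, snd_inl, snd_inr, zero_add] at h2
    rw [← hy, h2]
  have hsurj : Function.Surjective f := by
    rintro ⟨J, h1, h2⟩
    -- elements of J with fst = 0 have snd ∈ I
    have hsnd : ∀ z : DualNumber A, z ∈ J → fst z = 0 → snd z ∈ I := by
      intro z hz hz0
      have hmem : z ∈ (J : Set (DualNumber A)) ∩
          {z : DualNumber A | ∃ y : A, z = DualNumber.eps * TrivSqZeroExt.inl y} := by
        refine ⟨hz, ⟨snd z, ?_⟩⟩
        rw [eps_mul_inl']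
        ext <;> simp [hz0]
      rw [h2] at hmem
      obtain ⟨y, hy, hzy⟩ := hmem
      rw [eps_mul_inl'] at hzy
      rw [hzy]
      simpa using hy
    have hinrI : ∀ y : A, y ∈ I → (inr y : DualNumber A) ∈ J := by
      intro y hy
      have : (inr y : DualNumber A) ∈ (J : Set (DualNumber A)) ∩
          {z : DualNumber A | ∃ y : A, z = DualNumber.eps * TrivSqZeroExt.inl y} := by
        rw [h2]
        exact ⟨y, hy, (eps_mul_inl' y).symm⟩
      exact this.1
    have hdiff : ∀ z w : DualNumber A, z ∈ J → w ∈ J → fst z = fst w →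
        Ideal.Quotient.mk I (snd z) = Ideal.Quotient.mk I (snd w) := by
      intro z w hz hw hfw
      have hsub : z - w ∈ J := J.sub_mem hz hw
      have h0 : fst (z - w) = 0 := by simp [hfw]
      have := hsnd _ hsub h0
      rw [snd_sub] at this
      exact Ideal.Quotient.eq.mpr this
    have hex : ∀ x : I, ∃ z : DualNumber A, z ∈ J ∧ fst z = (x : A) := by
      intro x
      have hx : (x : A) ∈ (fun z : DualNumber A => fst z) '' (J : Set (DualNumber A)) := by
        rw [h1]; exact x.2
      obtain ⟨z, hz, hfz⟩ := hx
      exact ⟨z, hz, hfz⟩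
    set sec : I → DualNumber A := fun x => (hex x).choose with hsec
    have hsec1 : ∀ x : I, sec x ∈ J := fun x => (hex x).choose_spec.1
    have hsec2 : ∀ x : I, fst (sec x) = (x : A) := fun x => (hex x).choose_spec.2
    set φ : I →ₗ[A] A ⧸ I :=
      { toFun := fun x => Ideal.Quotient.mk I (snd (sec x))
        map_add' := by
          intro x y
          have key : Ideal.Quotient.mk I (snd (sec (x + y)))
              = Ideal.Quotient.mk I (snd (sec x + sec y)) :=
            hdiff _ _ (hsec1 _) (J.add_mem (hsec1 x) (hsec1 y)) (by simp [hsec2])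
          rw [key, snd_add, map_add]
        map_smul' := by
          intro a x
          have key : Ideal.Quotient.mk I (snd (sec (a • x)))
              = Ideal.Quotient.mk I (snd ((inl a : DualNumber A) * sec x)) :=
            hdiff _ _ (hsec1 _) (J.mul_mem_left _ (hsec1 x)) (by simp [hsec2, smul_eq_mul])
          rw [key, snd_mul]
          simp only [fst_inl, snd_inl, smul_zero, smul_eq_mul, add_zero, RingHom.id_apply,
            MulOpposite.smul_eq_mul_unop, MulOpposite.unop_op, mk_smul'] } with hφ
    refine ⟨φ, ?_⟩
    rw [hf]
    refine Subtype.ext ?_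
    show defIdeal I φ = J
    ext z
    constructor
    · rintro ⟨hz, hze⟩
      set w := sec ⟨fst z, hz⟩ with hw
      have hwJ : w ∈ J := hsec1 _
      have hwf : fst w = fst z := hsec2 _
      have hmk : Ideal.Quotient.mk I (snd z) = Ideal.Quotient.mk I (snd w) := hze
      have hsub : snd z - snd w ∈ I := Ideal.Quotient.eq.mp hmk
      have : z = w + inr (snd z - snd w) := by
        ext <;> simp [hwf]
      rw [this]
      exact J.add_mem hwJ (hinrI _ hsub)
    · intro hz
      have hfz : fst z ∈ I := by
        have : fst z ∈ (I : Set A) := h1 ▸ ⟨z, hz, rfl⟩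
        exact this
      exact ⟨hfz, hdiff _ _ hz (hsec1 ⟨fst z, hfz⟩) (hsec2 ⟨fst z, hfz⟩).symm⟩
  refine ⟨Equiv.ofBijective f ⟨hinj, hsurj⟩, ?_⟩
  intro φ
  have : ((Equiv.ofBijective f ⟨hinj, hsurj⟩) φ : Ideal (DualNumber A)) = defIdeal I φ := rfl
  rw [this]
  ext z
  simp only [SetLike.mem_coe, mem_defIdeal, Set.mem_setOf_eq, eps_mul_inl']
  constructor
  · rintro ⟨h, he⟩
    exact ⟨fst z, snd z, h, he, by rw [inl_fst_add_inr_snd_eq]⟩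
  · rintro ⟨x, y, hx, he, rfl⟩
    refine ⟨by simpa using hx, ?_⟩
    have h1 : fst (inl x + inr y : DualNumber A) = x := by simp
    have h2 : snd (inl x + inr y : DualNumber A) = y := by simp
    rw [h2, he]
    exact congrArg φ (Subtype.ext h1.symm)
end

section
/- Let K be a field and let B = ⊕_{i≥0} B_i be a commutative graded K-algebra that is finitely generated as a K-algebra by homogeneous elements. Let M = ⊕_{i≥0} M_i be a finitely generated graded B-module. For q ≥ 0 write B_{>q} = ⊕_{i>q} B_i (a homogeneous ideal of B), B_{≤q} = B/B_{>q}, and M_{≤q} = M/(⊕_{i>q} M_i), a graded module over B_{≤q}. Every degree-preserving K-derivation d : B → M maps B_{>q} into ⊕_{i>q} M_i, hence induces a degree-preserving K-derivation B_{≤q} → M_{≤q}. Then there exists q₀ ≥ 0 such that for all q ≥ q₀ this truncation map is a bijection from the space of degree-preserving K-derivations B → M onto the space of degree-preserving K-derivations B_{≤q} → M_{≤q}. -/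
/-!
Present `B` as a quotient of the polynomial ring `K[X_s]` on its homogeneous generators, with
`X_s` of weight `deg s`. The kernel is generated by finitely many homogeneous relations; let `q₀`
bound their degrees and those of the generators, and let `q ≥ q₀`. Two degree-preserving
derivations with the same truncation agree on the generators, because there `M → M_{≤q}` is
injective, hence they are equal. Conversely, given `D` on the truncation, lift each `D(s)` to
`m_s ∈ M_{deg s}` and put `δ p = Σ_s (∂p/∂X_s)(s) • m_s`. This `δ` is homogeneous and reduces to
`D` modulo `M_{>q}`, so on a relation of degree `e ≤ q` it takes a value in `M_e` that vanishes
modulo `M_{>q}`, i.e. zero. By the Leibniz rule `δ` kills the whole kernel and descends to `B`.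
-/

open MvPolynomial DirectSum

theorem LinearMap.exists_comp_eq_of_surjective {R V W U : Type*} [Ring R]
    [AddCommGroup V] [Module R V] [AddCommGroup W] [Module R W] [AddCommGroup U] [Module R U]
    {f : V →ₗ[R] W} (hf : Function.Surjective f) {g : V →ₗ[R] U} (hker : ker f ≤ ker g) :
    ∃ h : W →ₗ[R] U, h ∘ₗ f = g :=
  ⟨(ker f).liftQ g hker ∘ₗ (f.quotKerEquivOfSurjective hf).symm.toLinearMap, by
    ext x
    simp⟩

section LeibnizAlong

variable {K A B Q : Type*} [CommRing K] [CommRing A] [Algebra K A] [CommRing B] [Algebra K B]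
  [AddCommGroup Q] [Module K Q] [Module B Q]

theorem map_one_eq_zero_of_leibniz {φ : A →ₐ[K] B} {δ : A →ₗ[K] Q}
    (hδ : ∀ p q, δ (p * q) = φ p • δ q + φ q • δ p) : δ 1 = 0 := by
  simpa using hδ 1 1

theorem eq_zero_of_mem_span_of_leibniz {φ : A →ₐ[K] B} {δ : A →ₗ[K] Q}
    (hδ : ∀ p q, δ (p * q) = φ p • δ q + φ q • δ p) {G : Set A}
    (hG : ∀ g ∈ G, φ g = 0 ∧ δ g = 0) {p : A} (hp : p ∈ Ideal.span G) : δ p = 0 := by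
  have hφ : Ideal.span G ≤ RingHom.ker φ := Ideal.span_le.2 fun g hg => (hG g hg).1
  induction hp using Submodule.span_induction with
  | mem g hg => exact (hG g hg).2
  | zero => exact map_zero δ
  | add x y _ _ hx hy => rw [map_add, hx, hy, add_zero]
  | smul r x hx ih =>
    rw [smul_eq_mul, hδ, ih, RingHom.mem_ker.1 (hφ hx), smul_zero, zero_smul, add_zero]

namespace MvPolynomial

variable {σ : Type*}

theorem linearMap_ext_of_leibniz {f : σ → B} {δ₁ δ₂ : MvPolynomial σ K →ₗ[K] Q}
    (h₁ : ∀ p q, δ₁ (p * q) = aeval f p • δ₁ q + aeval f q • δ₁ p)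
    (h₂ : ∀ p q, δ₂ (p * q) = aeval f p • δ₂ q + aeval f q • δ₂ p)
    (hX : ∀ s, δ₁ (X s) = δ₂ (X s)) : δ₁ = δ₂ := by
  refine LinearMap.ext fun p => ?_
  induction p using MvPolynomial.induction_on with
  | C a =>
    rw [← mul_one (C a), ← smul_eq_C_mul, map_smul, map_smul, map_one_eq_zero_of_leibniz h₁,
      map_one_eq_zero_of_leibniz h₂]
  | add p q hp hq => rw [map_add, map_add, hp, hq]
  | mul_X p s hp => rw [h₁, h₂, hp, hX]

variable [Fintype σ] [IsScalarTower K B Q]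

noncomputable def derivAlong (f : σ → B) (m : σ → Q) : MvPolynomial σ K →ₗ[K] Q :=
  ∑ s, LinearMap.smulRight ((aeval f).toLinearMap ∘ₗ (pderiv s).toLinearMap) (m s)

theorem derivAlong_apply (f : σ → B) (m : σ → Q) (p : MvPolynomial σ K) :
    derivAlong f m p = ∑ s, aeval f (pderiv s p) • m s := by
  simp [derivAlong]

theorem derivAlong_mul (f : σ → B) (m : σ → Q) (p q : MvPolynomial σ K) :
    derivAlong f m (p * q) = aeval f p • derivAlong f m q + aeval f q • derivAlong f m p := by
  simp only [derivAlong_apply, Finset.smul_sum, ← Finset.sum_add_distrib, Derivation.leibniz,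
    smul_eq_mul, map_add, map_mul, add_smul, mul_smul]

theorem derivAlong_X (f : σ → B) (m : σ → Q) (t : σ) :
    derivAlong f m (X t : MvPolynomial σ K) = m t := by
  classical
  simp [derivAlong_apply, pderiv_X, Pi.single_apply]

end MvPolynomial

end LeibnizAlong

namespace MvPolynomial

section GradedMonoid

variable {K B M σ ι : Type*} [CommRing K] [CommRing B] [Algebra K B] [AddCommMonoid ι]

theorem weightedHomogeneousSubmodule_le_of_X_mem (w : σ → ι)
    (𝒮 : ι → Submodule K (MvPolynomial σ K)) [SetLike.GradedMonoid 𝒮]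
    (hX : ∀ s, X s ∈ 𝒮 (w s)) (e : ι) : weightedHomogeneousSubmodule K w e ≤ 𝒮 e := by
  rw [weightedHomogeneousSubmodule_eq_finsupp_supported,
    AddMonoidAlgebra.supported_eq_span_single, Submodule.span_le]
  rintro _ ⟨d, rfl, rfl⟩
  have hd := SetLike.prod_pow_mem_graded 𝒮 w X d (F := d.support) fun s _ => hX s
  rw [← one_mul (Finset.prod _ _), ← C_1, ← Finsupp.prod, ← monomial_eq] at hd
  simpa [Finsupp.weight_apply, Finsupp.sum, single_eq_monomial] using hd

variable (𝒜 : ι → Submodule K B) [SetLike.GradedMonoid 𝒜] {w : σ → ι} {f : σ → B}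

theorem aeval_mem_of_isWeightedHomogeneous (hf : ∀ s, f s ∈ 𝒜 (w s)) {p : MvPolynomial σ K}
    {e : ι} (hp : p.IsWeightedHomogeneous w e) : aeval f p ∈ 𝒜 e := by
  let 𝒮 (e : ι) : Submodule K (MvPolynomial σ K) := (𝒜 e).comap (aeval f).toLinearMap
  have : SetLike.GradedMonoid 𝒮 :=
    { one_mem := by simpa [𝒮] using SetLike.one_mem_graded 𝒜
      mul_mem := fun i j p q (hp : aeval f p ∈ 𝒜 i) (hq : aeval f q ∈ 𝒜 j) =>
        show aeval f (p * q) ∈ 𝒜 (i + j) by rw [map_mul]; exact SetLike.mul_mem_graded hp hq }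
  exact weightedHomogeneousSubmodule_le_of_X_mem w 𝒮 (fun s => by simpa [𝒮] using hf s) e hp

theorem map_mem_of_isWeightedHomogeneous_of_leibniz [AddCommGroup M] [Module K M] [Module B M]
    (ℳ : ι → Submodule K M) [SetLike.GradedSMul 𝒜 ℳ] (hf : ∀ s, f s ∈ 𝒜 (w s))
    {δ : MvPolynomial σ K →ₗ[K] M} (hδ : ∀ p q, δ (p * q) = aeval f p • δ q + aeval f q • δ p)
    (hX : ∀ s, δ (X s) ∈ ℳ (w s)) {p : MvPolynomial σ K} {e : ι}
    (hp : p.IsWeightedHomogeneous w e) : δ p ∈ ℳ e := by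
  let 𝒮 (e : ι) : Submodule K (MvPolynomial σ K) :=
    (𝒜 e).comap (aeval f).toLinearMap ⊓ (ℳ e).comap δ
  have : SetLike.GradedMonoid 𝒮 :=
    { one_mem := by
        simpa [𝒮, map_one_eq_zero_of_leibniz hδ] using SetLike.one_mem_graded 𝒜
      mul_mem := fun i j p q ⟨(hp : aeval f p ∈ 𝒜 i), (hδp : δ p ∈ ℳ i)⟩
          ⟨(hq : aeval f q ∈ 𝒜 j), (hδq : δ q ∈ ℳ j)⟩ => by
        refine ⟨show aeval f (p * q) ∈ 𝒜 (i + j) by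
          rw [map_mul]; exact SetLike.mul_mem_graded hp hq, show δ (p * q) ∈ ℳ (i + j) from ?_⟩
        rw [hδ]
        refine add_mem (SetLike.GradedSMul.smul_mem hp hδq) ?_
        rw [add_comm]
        exact SetLike.GradedSMul.smul_mem hq hδp }
  exact (weightedHomogeneousSubmodule_le_of_X_mem w 𝒮
    (fun s => ⟨by simpa using hf s, hX s⟩) e hp).2

end GradedMonoid

section GradedAlgebra

variable {K B σ ι : Type*} [CommRing K] [CommRing B] [Algebra K B] [DecidableEq ι]
  [AddCommMonoid ι] (𝒜 : ι → Submodule K B) [GradedAlgebra 𝒜] {w : σ → ι} {f : σ → B}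

theorem aeval_weightedHomogeneousComponent (hf : ∀ s, f s ∈ 𝒜 (w s)) (e : ι)
    (p : MvPolynomial σ K) :
    aeval f (weightedHomogeneousComponent w e p) = decompose 𝒜 (aeval f p) e := by
  induction p using MvPolynomial.induction_on' with
  | monomial d c =>
    have hd : (monomial d c).IsWeightedHomogeneous w (Finsupp.weight w d) :=
      isWeightedHomogeneous_monomial _ _ _ rfl
    have hmem := aeval_mem_of_isWeightedHomogeneous 𝒜 hf hd
    rw [weightedHomogeneousComponent_of_mem hd]
    split_ifs with h
    · rw [h, decompose_of_mem_same 𝒜 hmem]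
    · rw [map_zero, decompose_of_mem_ne 𝒜 hmem (Ne.symm h)]
  | add p q hp hq =>
    rw [map_add, map_add, map_add, decompose_add, DirectSum.add_apply, Submodule.coe_add, hp, hq]

theorem exists_finset_isWeightedHomogeneous_span_eq_ker [IsNoetherianRing K] [Finite σ]
    (hf : ∀ s, f s ∈ 𝒜 (w s)) :
    ∃ G : Finset (MvPolynomial σ K), Ideal.span G = RingHom.ker (aeval (R := K) f) ∧
      ∀ g ∈ G, ∃ e, g.IsWeightedHomogeneous w e := by
  classical
  obtain ⟨G₀, hG₀⟩ := IsNoetherian.noetherian (RingHom.ker (aeval (R := K) f))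
  have hE (g : MvPolynomial σ K) := weightedHomogeneousComponent_finsupp (w := w) (φ := g)
  refine ⟨G₀.biUnion fun g => (hE g).toFinset.image (weightedHomogeneousComponent w · g),
    le_antisymm ?_ ?_, ?_⟩
  · refine Ideal.span_le.2 fun x hx => ?_
    simp only [Finset.coe_biUnion, Finset.coe_image, Set.mem_iUnion, Set.mem_image,
      Finset.mem_coe] at hx
    obtain ⟨g, hg, e, -, rfl⟩ := hx
    have hg0 : aeval f g = 0 := by
      rw [← RingHom.mem_ker, ← hG₀]
      exact Ideal.subset_span hg
    rw [SetLike.mem_coe, RingHom.mem_ker, aeval_weightedHomogeneousComponent 𝒜 hf, hg0,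
      decompose_zero, DirectSum.zero_apply, ZeroMemClass.coe_zero]
  · rw [← hG₀, Ideal.span_le]
    intro g hg
    rw [SetLike.mem_coe, ← sum_weightedHomogeneousComponent w g, finsum_eq_sum _ (hE g)]
    exact Ideal.sum_mem _ fun e he => Ideal.subset_span
      (Finset.mem_biUnion.2 ⟨g, hg, Finset.mem_image_of_mem _ he⟩)
  · simp only [Finset.mem_biUnion, Finset.mem_image]
    rintro _ ⟨g, -, e, -, rfl⟩
    exact ⟨e, weightedHomogeneousComponent_isWeightedHomogeneous e g⟩

end GradedAlgebra

end MvPolynomial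

section Truncation

variable {K B M : Type*} [CommRing K] [CommRing B] [Algebra K B] (𝒜 : ℕ → Submodule K B)
  [AddCommGroup M] [Module K M] [Module B M] (ℳ : ℕ → Submodule K M) [SetLike.GradedSMul 𝒜 ℳ]

theorem smul_mem_span_iUnion_Ioi_of_mem [Decomposition ℳ] {q i : ℕ} (hi : q < i) {a : B}
    (ha : a ∈ 𝒜 i) (m : M) : a • m ∈ Submodule.span B (⋃ j ∈ Set.Ioi q, (ℳ j : Set M)) := by
  induction m using DirectSum.Decomposition.inductionOn ℳ with
  | zero => rw [smul_zero]; exact zero_mem _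
  | @homogeneous j m =>
    exact Submodule.subset_span (Set.mem_biUnion (x := i + j) (by simp; omega)
      (SetLike.GradedSMul.smul_mem ha m.2))
  | add m m' hm hm' => rw [smul_add]; exact add_mem hm hm'

theorem smul_mem_span_iUnion_Ioi [Decomposition ℳ] {q : ℕ} {x : B}
    (hx : x ∈ Ideal.span (⋃ i ∈ Set.Ioi q, (𝒜 i : Set B))) (m : M) :
    x • m ∈ Submodule.span B (⋃ j ∈ Set.Ioi q, (ℳ j : Set M)) := by
  induction hx using Submodule.span_induction with
  | mem a ha =>
    obtain ⟨i, hi, ha⟩ := Set.mem_iUnion₂.1 ha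
    exact smul_mem_span_iUnion_Ioi_of_mem 𝒜 ℳ hi ha m
  | zero => rw [zero_smul]; exact zero_mem _
  | add x y _ _ hx hy => rw [add_smul]; exact add_mem hx hy
  | smul b x _ hx => rw [smul_eq_mul, mul_smul]; exact Submodule.smul_mem _ b hx

theorem map_mem_span_iUnion_Ioi_of_leibniz [Decomposition ℳ] {q : ℕ} {d : B →ₗ[K] M}
    (hd : ∀ a b : B, d (a * b) = a • d b + b • d a) (hdeg : ∀ i, ∀ a ∈ 𝒜 i, d a ∈ ℳ i) {x : B}
    (hx : x ∈ Ideal.span (⋃ i ∈ Set.Ioi q, (𝒜 i : Set B))) :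
    d x ∈ Submodule.span B (⋃ i ∈ Set.Ioi q, (ℳ i : Set M)) := by
  induction hx using Submodule.span_induction with
  | mem a ha =>
    obtain ⟨i, hi, ha⟩ := Set.mem_iUnion₂.1 ha
    exact Submodule.subset_span (Set.mem_biUnion hi (hdeg i a ha))
  | zero => rw [map_zero]; exact zero_mem _
  | add x y _ _ hx hy => rw [map_add]; exact add_mem hx hy
  | smul a x hx ih =>
    rw [smul_eq_mul, hd]
    exact add_mem (Submodule.smul_mem _ a ih) (smul_mem_span_iUnion_Ioi 𝒜 ℳ hx (d a))

theorem smul_mem_iSup_Ioi_of_mem [GradedAlgebra 𝒜] {q j : ℕ} (hj : q < j) (a : B) {m : M}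
    (hm : m ∈ ℳ j) : a • m ∈ ⨆ i ∈ Set.Ioi q, ℳ i := by
  induction a using DirectSum.Decomposition.inductionOn 𝒜 with
  | zero => rw [zero_smul]; exact zero_mem _
  | @homogeneous i a =>
    exact le_biSup ℳ (show i + j ∈ Set.Ioi q by simp; omega) (SetLike.GradedSMul.smul_mem a.2 hm)
  | add a a' ha ha' => rw [add_smul]; exact add_mem ha ha'

theorem smul_mem_iSup_Ioi [GradedAlgebra 𝒜] [IsScalarTower K B M] {q : ℕ} (a : B) {m : M}
    (hm : m ∈ ⨆ i ∈ Set.Ioi q, ℳ i) : a • m ∈ ⨆ i ∈ Set.Ioi q, ℳ i :=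
  (iSup₂_le fun _ hj _ hm => smul_mem_iSup_Ioi_of_mem 𝒜 ℳ hj a hm :
    ⨆ i ∈ Set.Ioi q, ℳ i ≤ (⨆ i ∈ Set.Ioi q, ℳ i).comap (DistribSMul.toLinearMap K M a)) hm

theorem mem_iSup_Ioi_of_mem_span [GradedAlgebra 𝒜] [IsScalarTower K B M] {q : ℕ} {m : M}
    (hm : m ∈ Submodule.span B (⋃ i ∈ Set.Ioi q, (ℳ i : Set M))) :
    m ∈ ⨆ i ∈ Set.Ioi q, ℳ i := by
  induction hm using Submodule.span_induction with
  | mem x hx =>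
    obtain ⟨i, hi, hx⟩ := Set.mem_iUnion₂.1 hx
    exact le_biSup ℳ hi hx
  | zero => exact zero_mem _
  | add x y _ _ hx hy => exact add_mem hx hy
  | smul a x _ hx => exact smul_mem_iSup_Ioi 𝒜 ℳ a hx

theorem eq_zero_of_mem_of_mem_span_iUnion_Ioi [GradedAlgebra 𝒜] [Decomposition ℳ]
    [IsScalarTower K B M] {q i : ℕ} (hi : i ≤ q) {m : M} (hmi : m ∈ ℳ i)
    (hm : m ∈ Submodule.span B (⋃ j ∈ Set.Ioi q, (ℳ j : Set M))) : m = 0 :=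
  Submodule.disjoint_def.1
    ((Decomposition.isInternal ℳ).submodule_iSupIndep.disjoint_biSup (y := Set.Ioi q)
      (by simpa using hi)) m hmi (mem_iSup_Ioi_of_mem_span 𝒜 ℳ hm)

end Truncation

section Lift

variable {K B M : Type*} [CommRing K] [CommRing B] [Algebra K B] (𝒜 : ℕ → Submodule K B)
  [AddCommGroup M] [Module K M] [Module B M] (ℳ : ℕ → Submodule K M) {N : Submodule B M} {q : ℕ}

theorem exists_quotient_derivation [IsScalarTower K B M] {J : Ideal B} {d : B →ₗ[K] M}
    (hd : ∀ a b, d (a * b) = a • d b + b • d a) (hdJ : ∀ x ∈ J, d x ∈ N) :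
    ∃ D : (B ⧸ J) →ₗ[K] (M ⧸ N),
      (∀ a b : B, D (Ideal.Quotient.mk J a * Ideal.Quotient.mk J b)
        = a • D (Ideal.Quotient.mk J b) + b • D (Ideal.Quotient.mk J a)) ∧
      ∀ x, D (Ideal.Quotient.mk J x) = N.mkQ (d x) := by
  obtain ⟨D, hD⟩ := LinearMap.exists_comp_eq_of_surjective
    (f := (Ideal.Quotient.mkₐ K J).toLinearMap) (Ideal.Quotient.mkₐ_surjective K J)
    (g := N.mkQ.restrictScalars K ∘ₗ d) fun x hx =>
      (Submodule.Quotient.mk_eq_zero N).2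
        (hdJ x (Ideal.Quotient.eq_zero_iff_mem.1 (LinearMap.mem_ker.1 hx)))
  have hDmk (x : B) : D (Ideal.Quotient.mk J x) = N.mkQ (d x) := LinearMap.congr_fun hD x
  refine ⟨D, fun a b => ?_, hDmk⟩
  rw [← map_mul, hDmk, hDmk, hDmk, hd, map_add, map_smul, map_smul]

theorem eq_zero_of_aeval_eq_zero_of_leibniz [SetLike.GradedMonoid 𝒜] [SetLike.GradedSMul 𝒜 ℳ]
    {σ : Type*} {w : σ → ℕ} {f : σ → B} (hf : ∀ s, f s ∈ 𝒜 (w s))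
    {G : Finset (MvPolynomial σ K)} (hG : Ideal.span G = RingHom.ker (aeval (R := K) f))
    (hGq : ∀ g ∈ G, ∃ e ≤ q, g.IsWeightedHomogeneous w e)
    (hN : ∀ i ≤ q, ∀ m ∈ ℳ i, m ∈ N → m = 0) {δ : MvPolynomial σ K →ₗ[K] M}
    (hδ : ∀ p p', δ (p * p') = aeval f p • δ p' + aeval f p' • δ p)
    (hδX : ∀ s, δ (X s) ∈ ℳ (w s)) (hδN : ∀ p, aeval f p = 0 → δ p ∈ N)
    {p : MvPolynomial σ K} (hp : aeval f p = 0) : δ p = 0 := by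
  rw [← RingHom.mem_ker, ← hG] at hp
  refine eq_zero_of_mem_span_of_leibniz hδ (fun g hg => ?_) hp
  have hg0 : aeval f g = 0 := by
    rw [← RingHom.mem_ker, ← hG]
    exact Ideal.subset_span hg
  obtain ⟨e, he, hge⟩ := hGq g hg
  exact ⟨hg0, hN e he _ (map_mem_of_isWeightedHomogeneous_of_leibniz 𝒜 ℳ hf hδ hδX hge)
    (hδN g hg0)⟩

theorem exists_graded_derivation_lift [GradedAlgebra 𝒜] [IsScalarTower K B M]
    [SetLike.GradedSMul 𝒜 ℳ] {σ : Type*} [Fintype σ] {w : σ → ℕ} {f : σ → B}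
    (hf : ∀ s, f s ∈ 𝒜 (w s)) (hsurj : Function.Surjective (aeval (R := K) f))
    {G : Finset (MvPolynomial σ K)} (hG : Ideal.span G = RingHom.ker (aeval (R := K) f))
    (hGq : ∀ g ∈ G, ∃ e ≤ q, g.IsWeightedHomogeneous w e)
    (hN : ∀ i ≤ q, ∀ m ∈ ℳ i, m ∈ N → m = 0)
    (D : B →ₗ[K] M ⧸ N) (hD : ∀ a b, D (a * b) = a • D b + b • D a)
    (hDdeg : ∀ i, ∀ a ∈ 𝒜 i, D a ∈ (ℳ i).map (N.mkQ.restrictScalars K)) :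
    ∃ d : B →ₗ[K] M, ((∀ a b, d (a * b) = a • d b + b • d a) ∧ ∀ i, ∀ a ∈ 𝒜 i, d a ∈ ℳ i) ∧
      ∀ x, D x = N.mkQ (d x) := by
  choose m hm hmD using fun s => Submodule.mem_map.1 (hDdeg (w s) (f s) (hf s))
  set δ : MvPolynomial σ K →ₗ[K] M := derivAlong (K := K) f m
  have hδ : ∀ p p', δ (p * p') = aeval f p • δ p' + aeval f p' • δ p := derivAlong_mul f m
  have hδX : ∀ s, δ (X s) ∈ ℳ (w s) := fun s => (derivAlong_X (K := K) f m s).symm ▸ hm s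
  have hδD : N.mkQ.restrictScalars K ∘ₗ δ = D ∘ₗ (aeval f).toLinearMap := by
    refine linearMap_ext_of_leibniz (f := f) (fun p p' => ?_) (fun p p' => ?_) fun s => ?_
    · simp [hδ]
    · simp [hD]
    · simp [δ, derivAlong_X, ← hmD s]
  have hδN (p : MvPolynomial σ K) (hp : aeval f p = 0) : δ p ∈ N := by
    simpa [hp] using LinearMap.congr_fun hδD p
  obtain ⟨d, hd⟩ := LinearMap.exists_comp_eq_of_surjective (f := (aeval f).toLinearMap) hsurj
    (g := δ) fun p hp =>
      eq_zero_of_aeval_eq_zero_of_leibniz 𝒜 ℳ hf hG hGq hN hδ hδX hδN (LinearMap.mem_ker.1 hp)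
  have hdδ : ∀ p, d (aeval f p) = δ p := LinearMap.congr_fun hd
  refine ⟨d, ⟨fun a b => ?_, fun i a ha => ?_⟩, fun x => ?_⟩
  · obtain ⟨p, rfl⟩ := hsurj a
    obtain ⟨p', rfl⟩ := hsurj b
    rw [← map_mul, hdδ, hdδ, hdδ, hδ]
  · obtain ⟨p, rfl⟩ := hsurj a
    rw [← decompose_of_mem_same 𝒜 ha, ← aeval_weightedHomogeneousComponent 𝒜 hf, hdδ]
    exact map_mem_of_isWeightedHomogeneous_of_leibniz 𝒜 ℳ hf hδ hδX
      (weightedHomogeneousComponent_isWeightedHomogeneous i p)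
  · obtain ⟨p, rfl⟩ := hsurj x
    rw [hdδ]
    exact (LinearMap.congr_fun hδD p).symm

theorem eq_of_mkQ_apply_eq {S : Set B} (hS : Algebra.adjoin K S = ⊤)
    (hSq : ∀ s ∈ S, ∃ i ≤ q, s ∈ 𝒜 i) (hN : ∀ i ≤ q, ∀ m ∈ ℳ i, m ∈ N → m = 0)
    {d₁ d₂ : B →ₗ[K] M} (hd₁ : ∀ a b, d₁ (a * b) = a • d₁ b + b • d₁ a)
    (hd₂ : ∀ a b, d₂ (a * b) = a • d₂ b + b • d₂ a) (hdeg₁ : ∀ i, ∀ a ∈ 𝒜 i, d₁ a ∈ ℳ i)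
    (hdeg₂ : ∀ i, ∀ a ∈ 𝒜 i, d₂ a ∈ ℳ i) (h : ∀ x, N.mkQ (d₁ x) = N.mkQ (d₂ x)) : d₁ = d₂ := by
  have := Derivation.ext_of_adjoin_eq_top (D1 := Derivation.mk' d₁ hd₁)
    (D2 := Derivation.mk' d₂ hd₂) S hS fun s hs => ?_
  · simpa using congrArg Derivation.toLinearMap this
  obtain ⟨i, hi, hsi⟩ := hSq s hs
  rw [Derivation.coe_mk', Derivation.coe_mk', ← sub_eq_zero]
  exact hN i hi _ (sub_mem (hdeg₁ i s hsi) (hdeg₂ i s hsi)) ((Submodule.Quotient.eq N).1 (h s))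

end Lift

theorem truncation_bijective_on_graded_derivations_general
    (K B M : Type*) [Field K] [CommRing B] [Algebra K B]
    (𝒜 : ℕ → Submodule K B) [GradedAlgebra 𝒜]
    (S : Finset B) (hShom : ∀ s ∈ S, SetLike.IsHomogeneousElem 𝒜 s)
    (hSgen : Algebra.adjoin K (S : Set B) = ⊤)
    [AddCommGroup M] [Module K M] [Module B M] [IsScalarTower K B M]
    (ℳ : ℕ → Submodule K M) [DirectSum.Decomposition ℳ] [SetLike.GradedSMul 𝒜 ℳ] :
    -- every degree-preserving derivation maps B_{>q} into ⊕_{i>q} Mᵢ and induces a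
    -- degree-preserving derivation on the truncations
    (∀ q : ℕ, ∀ (J : Ideal B) (N : Submodule B M),
      J = Ideal.span (⋃ i ∈ Set.Ioi q, (𝒜 i : Set B)) →
      N = Submodule.span B (⋃ i ∈ Set.Ioi q, (ℳ i : Set M)) →
      ∀ d : B →ₗ[K] M,
        (∀ a b : B, d (a * b) = a • d b + b • d a) →
        (∀ i : ℕ, ∀ a ∈ 𝒜 i, d a ∈ ℳ i) →
        (∀ x ∈ J, d x ∈ N) ∧
        ∃ D : (B ⧸ J) →ₗ[K] (M ⧸ N),
          (∀ a b : B, D (Ideal.Quotient.mk J a * Ideal.Quotient.mk J b)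
              = a • D (Ideal.Quotient.mk J b) + b • D (Ideal.Quotient.mk J a)) ∧
          (∀ i : ℕ, ∀ a ∈ 𝒜 i, D (Ideal.Quotient.mk J a)
              ∈ Submodule.map (LinearMap.restrictScalars K N.mkQ) (ℳ i)) ∧
          (∀ x : B, D (Ideal.Quotient.mk J x) = N.mkQ (d x))) ∧
    -- for q large, truncation is a bijection onto degree-preserving derivations
    -- of the truncated algebra with values in the truncated module
    (∃ q₀ : ℕ, ∀ q : ℕ, q₀ ≤ q → ∀ (J : Ideal B) (N : Submodule B M),
      J = Ideal.span (⋃ i ∈ Set.Ioi q, (𝒜 i : Set B)) →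
      N = Submodule.span B (⋃ i ∈ Set.Ioi q, (ℳ i : Set M)) →
      ∀ D : (B ⧸ J) →ₗ[K] (M ⧸ N),
        (∀ a b : B, D (Ideal.Quotient.mk J a * Ideal.Quotient.mk J b)
            = a • D (Ideal.Quotient.mk J b) + b • D (Ideal.Quotient.mk J a)) →
        (∀ i : ℕ, ∀ a ∈ 𝒜 i, D (Ideal.Quotient.mk J a)
            ∈ Submodule.map (LinearMap.restrictScalars K N.mkQ) (ℳ i)) →
        ∃! d : B →ₗ[K] M,
          ((∀ a b : B, d (a * b) = a • d b + b • d a) ∧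
            (∀ i : ℕ, ∀ a ∈ 𝒜 i, d a ∈ ℳ i)) ∧
          (∀ x : B, D (Ideal.Quotient.mk J x) = N.mkQ (d x))) := by
  refine ⟨fun q J N hJ hN d hd hdeg => ?_, ?_⟩
  · have hdJ (x : B) (hx : x ∈ J) : d x ∈ N :=
      hN ▸ map_mem_span_iUnion_Ioi_of_leibniz 𝒜 ℳ hd hdeg (hJ ▸ hx)
    obtain ⟨D, hDleib, hDmk⟩ := exists_quotient_derivation hd hdJ
    exact ⟨hdJ, D, hDleib, fun i a ha => ⟨d a, hdeg i a ha, (hDmk a).symm⟩, hDmk⟩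
  · choose w hw using fun s : S => hShom s s.2
    have hsurj : Function.Surjective (aeval (R := K) ((↑) : S → B)) := by
      rw [← AlgHom.range_eq_top, ← Algebra.adjoin_range_eq_range_aeval]
      simpa using hSgen
    obtain ⟨G, hG, hGhom⟩ := exists_finset_isWeightedHomogeneous_span_eq_ker 𝒜 hw
    choose! e he using hGhom
    refine ⟨Finset.univ.sup w ⊔ G.sup e, fun q hq J N hJ hN D hD hDdeg => ?_⟩
    subst hJ hN
    have hlow (i : ℕ) (hi : i ≤ q) (m : M) := eq_zero_of_mem_of_mem_span_iUnion_Ioi 𝒜 ℳ hi (m := m)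
    obtain ⟨d, hd, hdD⟩ := exists_graded_derivation_lift 𝒜 ℳ hw hsurj hG
      (fun g hg => ⟨e g, (Finset.le_sup hg).trans (le_sup_right.trans hq), he g hg⟩) hlow
      (D ∘ₗ (Ideal.Quotient.mkₐ K _).toLinearMap) hD hDdeg
    refine ⟨d, ⟨hd, hdD⟩, fun d' ⟨hd', hd'D⟩ => ?_⟩
    refine eq_of_mkQ_apply_eq 𝒜 ℳ hSgen (fun s hs => ?_) hlow hd'.1 hd.1 hd'.2 hd.2
      fun x => (hd'D x).symm.trans (hdD x)
    exact ⟨w ⟨s, hs⟩, (Finset.le_sup (Finset.mem_univ _)).trans (le_sup_left.trans hq), hw _⟩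

/-- The degree-0 case of Proposition 4.1.4: for a commutative graded `K`-algebra
`B = ⊕_{i≥0} Bᵢ` finitely generated by homogeneous elements and a finitely generated
graded `B`-module `M`, every degree-preserving `K`-derivation `B → M` maps
`B_{>q}` into `⊕_{i>q} Mᵢ` (hence induces a degree-preserving derivation
`B_{≤q} → M_{≤q}`), and there is a `q₀` such that for all `q ≥ q₀` this truncation
is a bijection from degree-preserving `K`-derivations `B → M` onto degree-preserving
`K`-derivations `B_{≤q} → M_{≤q}`. -/
theorem truncation_bijective_on_graded_derivations
    (K B M : Type*) [Field K] [CommRing B] [Algebra K B]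
    (𝒜 : ℕ → Submodule K B) [GradedAlgebra 𝒜]
    (S : Finset B) (hShom : ∀ s ∈ S, SetLike.IsHomogeneousElem 𝒜 s)
    (hSgen : Algebra.adjoin K (S : Set B) = ⊤)
    [AddCommGroup M] [Module K M] [Module B M] [IsScalarTower K B M]
    [Module.Finite B M]
    (ℳ : ℕ → Submodule K M) [DirectSum.Decomposition ℳ] [SetLike.GradedSMul 𝒜 ℳ] :
    -- every degree-preserving derivation maps B_{>q} into ⊕_{i>q} Mᵢ and induces a
    -- degree-preserving derivation on the truncations
    (∀ q : ℕ, ∀ (J : Ideal B) (N : Submodule B M),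
      J = Ideal.span (⋃ i ∈ Set.Ioi q, (𝒜 i : Set B)) →
      N = Submodule.span B (⋃ i ∈ Set.Ioi q, (ℳ i : Set M)) →
      ∀ d : B →ₗ[K] M,
        (∀ a b : B, d (a * b) = a • d b + b • d a) →
        (∀ i : ℕ, ∀ a ∈ 𝒜 i, d a ∈ ℳ i) →
        (∀ x ∈ J, d x ∈ N) ∧
        ∃ D : (B ⧸ J) →ₗ[K] (M ⧸ N),
          (∀ a b : B, D (Ideal.Quotient.mk J a * Ideal.Quotient.mk J b)
              = a • D (Ideal.Quotient.mk J b) + b • D (Ideal.Quotient.mk J a)) ∧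
          (∀ i : ℕ, ∀ a ∈ 𝒜 i, D (Ideal.Quotient.mk J a)
              ∈ Submodule.map (LinearMap.restrictScalars K N.mkQ) (ℳ i)) ∧
          (∀ x : B, D (Ideal.Quotient.mk J x) = N.mkQ (d x))) ∧
    -- for q large, truncation is a bijection onto degree-preserving derivations
    -- of the truncated algebra with values in the truncated module
    (∃ q₀ : ℕ, ∀ q : ℕ, q₀ ≤ q → ∀ (J : Ideal B) (N : Submodule B M),
      J = Ideal.span (⋃ i ∈ Set.Ioi q, (𝒜 i : Set B)) →
      N = Submodule.span B (⋃ i ∈ Set.Ioi q, (ℳ i : Set M)) →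
      ∀ D : (B ⧸ J) →ₗ[K] (M ⧸ N),
        (∀ a b : B, D (Ideal.Quotient.mk J a * Ideal.Quotient.mk J b)
            = a • D (Ideal.Quotient.mk J b) + b • D (Ideal.Quotient.mk J a)) →
        (∀ i : ℕ, ∀ a ∈ 𝒜 i, D (Ideal.Quotient.mk J a)
            ∈ Submodule.map (LinearMap.restrictScalars K N.mkQ) (ℳ i)) →
        ∃! d : B →ₗ[K] M,
          ((∀ a b : B, d (a * b) = a • d b + b • d a) ∧
            (∀ i : ℕ, ∀ a ∈ 𝒜 i, d a ∈ ℳ i)) ∧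
          (∀ x : B, D (Ideal.Quotient.mk J x) = N.mkQ (d x))) :=
  truncation_bijective_on_graded_derivations_general K B M 𝒜 S hShom hSgen ℳ
end
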